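/- The action of G on Γ_G is isometric: for all f, g, h ∈ G, α ∈ [0,|g|], β ∈ [0,|h|], d(f·⟨α,g⟩, f·⟨β,h⟩) = d(⟨α,g⟩, ⟨β,h⟩). In particular d(f·ε, f·⟨α,g⟩) = d(ε, ⟨α,g⟩) = α where ε = ⟨0,1⟩. -/

import Mathlib

/-!
Write `A = c(f⁻¹,g)`, `B = c(f⁻¹,h)`. The point `⟨α,g⟩` is sent to `⟨|f|-α, f⟩` on the segment
`[ε, f]` when `α ≤ A`, and into the branch towards `fg` otherwise. The Gromov products of the
images are `c(f,f) = |f|`, `c(f,fh) = |f| - B` and `c(fg,fh) = |f| - A - B + c(g,h)`, and the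
Lyndon axiom (the two smallest of `A`, `B`, `c(g,h)` coincide) makes the distance formula give
the same value before and after the action in each of the three cases: both points near `ε`,
one of them, or neither.
-/

theorem min_gromov_le {Λ G : Type*} [LinearOrder Λ] {c : G → G → Λ}
    (hcomm : ∀ x y, c x y = c y x) (hiso : ∀ x y z, c x z < c x y → c x z = c y z)
    (x y z : G) : min (c x y) (c x z) ≤ c y z := by
  by_contra! hlt
  have hyx : c y z < c y x := hcomm x y ▸ hlt.trans_le (min_le_left _ _)
  exact (hlt.trans_le (min_le_right _ _)).ne (hiso y x z hyx)

section UniversalTree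

variable {Λ : Type*} [AddCommGroup Λ] [LinearOrder Λ] {G : Type*} {l : G → Λ} {c : G → G → Λ}

def treeDist (c : G → G → Λ) (p q : Λ × G) : Λ :=
  p.1 + q.1 - 2 • min p.1 (min q.1 (c p.2 q.2))

theorem treeDist_comm (hcomm : ∀ x y, c x y = c y x) (p q : Λ × G) :
    treeDist c p q = treeDist c q p := by
  simp only [treeDist, hcomm q.2, min_left_comm q.1, add_comm q.1]

variable [Group G]

def treeSMul (l : G → Λ) (c : G → G → Λ) (f : G) (p : Λ × G) : Λ × G :=
  if p.1 ≤ c f⁻¹ p.2 then (l f + p.1 - 2 • min p.1 (c f⁻¹ p.2), f)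
  else (l f + p.1 - 2 • c f⁻¹ p.2, f * p.2)

theorem treeSMul_of_le {f g : G} {α : Λ} (h : α ≤ c f⁻¹ g) :
    treeSMul l c f (α, g) = (l f - α, f) := by
  simp only [treeSMul, if_pos h, min_eq_left h, two_nsmul]
  congr 1
  abel

theorem treeSMul_of_lt {f g : G} {α : Λ} (h : c f⁻¹ g < α) :
    treeSMul l c f (α, g) = (l f + α - 2 • c f⁻¹ g, f * g) :=
  if_neg h.not_ge

variable [IsOrderedAddMonoid Λ]

theorem gromov_comm (hc : ∀ x y, 2 • c x y = l x + l y - l (x⁻¹ * y))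
    (hinv : ∀ x, l x⁻¹ = l x) (x y : G) : c x y = c y x := by
  apply nsmul_right_injective two_ne_zero
  simp only [hc, ← hinv (x⁻¹ * y), mul_inv_rev, inv_inv]
  abel

theorem gromov_one_left (hc : ∀ x y, 2 • c x y = l x + l y - l (x⁻¹ * y)) (hl1 : l 1 = 0)
    (x : G) : c 1 x = 0 := by
  apply nsmul_right_injective two_ne_zero
  simp [hc, hl1]

theorem gromov_self (hc : ∀ x y, 2 • c x y = l x + l y - l (x⁻¹ * y)) (hl1 : l 1 = 0)
    (x : G) : c x x = l x := by
  apply nsmul_right_injective two_ne_zero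
  simp [hc, hl1, two_nsmul]

theorem gromov_self_mul (hc : ∀ x y, 2 • c x y = l x + l y - l (x⁻¹ * y))
    (hinv : ∀ x, l x⁻¹ = l x) (f h : G) : c f (f * h) = l f - c f⁻¹ h := by
  apply nsmul_right_injective two_ne_zero
  simp only [nsmul_sub, hc, inv_inv, inv_mul_cancel_left, hinv]
  abel

theorem gromov_mul_mul (hc : ∀ x y, 2 • c x y = l x + l y - l (x⁻¹ * y))
    (hinv : ∀ x, l x⁻¹ = l x) (f g h : G) :
    c (f * g) (f * h) = l f - c f⁻¹ g - c f⁻¹ h + c g h := by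
  apply nsmul_right_injective two_ne_zero
  simp only [nsmul_add, nsmul_sub, hc, inv_inv, hinv, mul_inv_rev, mul_assoc,
    inv_mul_cancel_left]
  abel

theorem treeDist_treeSMul_of_le_of_le (hc : ∀ x y, 2 • c x y = l x + l y - l (x⁻¹ * y))
    (hl1 : l 1 = 0) (hinv : ∀ x, l x⁻¹ = l x) (hiso : ∀ x y z, c x z < c x y → c x z = c y z)
    {f g h : G} {α β : Λ} (hβ : 0 ≤ β) (hαA : α ≤ c f⁻¹ g) (hβB : β ≤ c f⁻¹ h) :
    treeDist c (treeSMul l c f (α, g)) (treeSMul l c f (β, h)) = treeDist c (α, g) (β, h) := by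
  have hC : min α β ≤ c g h :=
    (min_le_min hαA hβB).trans (min_gromov_le (gromov_comm hc hinv) hiso _ _ _)
  rw [treeSMul_of_le hαA, treeSMul_of_le hβB]
  simp only [treeDist, gromov_self hc hl1]
  grind

theorem treeDist_treeSMul_of_le_of_lt (hc : ∀ x y, 2 • c x y = l x + l y - l (x⁻¹ * y))
    (hinv : ∀ x, l x⁻¹ = l x) (hiso : ∀ x y z, c x z < c x y → c x z = c y z)
    {f g h : G} {α β : Λ} (hαA : α ≤ c f⁻¹ g) (hBβ : c f⁻¹ h < β) :
    treeDist c (treeSMul l c f (α, g)) (treeSMul l c f (β, h)) = treeDist c (α, g) (β, h) := by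
  have hC : min (c f⁻¹ g) (c f⁻¹ h) ≤ c g h := min_gromov_le (gromov_comm hc hinv) hiso _ _ _
  have hBA : c f⁻¹ h < c f⁻¹ g → c f⁻¹ h = c g h := hiso _ _ _
  rw [treeSMul_of_le hαA, treeSMul_of_lt hBβ]
  simp only [treeDist, gromov_self_mul hc hinv]
  grind

theorem treeDist_treeSMul_of_lt_of_lt (hc : ∀ x y, 2 • c x y = l x + l y - l (x⁻¹ * y))
    (hinv : ∀ x, l x⁻¹ = l x) (hiso : ∀ x y z, c x z < c x y → c x z = c y z)
    {f g h : G} {α β : Λ} (hAα : c f⁻¹ g < α) (hBβ : c f⁻¹ h < β) :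
    treeDist c (treeSMul l c f (α, g)) (treeSMul l c f (β, h)) = treeDist c (α, g) (β, h) := by
  have hAB : c f⁻¹ g < c f⁻¹ h → c f⁻¹ g = c g h := fun hlt ↦
    (hiso _ _ _ hlt).trans (gromov_comm hc hinv _ _)
  have hBA : c f⁻¹ h < c f⁻¹ g → c f⁻¹ h = c g h := hiso _ _ _
  rw [treeSMul_of_lt hAα, treeSMul_of_lt hBβ]
  simp only [treeDist, gromov_mul_mul hc hinv]
  generalize c f⁻¹ g = A, c f⁻¹ h = B, c g h = C at *
  have hmin : min (l f + α - 2 • A) (min (l f + β - 2 • B) (l f - A - B + C)) =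
      l f - A - B + min α (min β C) := by
    rcases lt_trichotomy A B with hlt | rfl | hlt
    · grind
    · have shift (x : Λ) : l f + x - 2 • A = l f - A - A + x := by rw [two_nsmul]; abel
      rw [shift, shift, min_add_add_left, min_add_add_left]
    · grind
  rw [hmin]
  abel

theorem treeDist_treeSMul (hc : ∀ x y, 2 • c x y = l x + l y - l (x⁻¹ * y))
    (hl1 : l 1 = 0) (hinv : ∀ x, l x⁻¹ = l x) (hiso : ∀ x y z, c x z < c x y → c x z = c y z)
    (f g h : G) {α β : Λ} (hβ : 0 ≤ β) :
    treeDist c (treeSMul l c f (α, g)) (treeSMul l c f (β, h)) = treeDist c (α, g) (β, h) := by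
  rcases le_or_gt α (c f⁻¹ g) with hαA | hAα <;>
    rcases le_or_gt β (c f⁻¹ h) with hβB | hBβ
  · exact treeDist_treeSMul_of_le_of_le hc hl1 hinv hiso hβ hαA hβB
  · exact treeDist_treeSMul_of_le_of_lt hc hinv hiso hαA hBβ
  · rw [treeDist_comm (gromov_comm hc hinv), treeDist_comm (gromov_comm hc hinv) (α, g)]
    exact treeDist_treeSMul_of_le_of_lt hc hinv hiso hβB hAα
  · exact treeDist_treeSMul_of_lt_of_lt hc hinv hiso hAα hBβ

theorem treeDist_one_left (hc : ∀ x y, 2 • c x y = l x + l y - l (x⁻¹ * y)) (hl1 : l 1 = 0)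
    (g : G) {α : Λ} (hα : 0 ≤ α) : treeDist c (0, 1) (α, g) = α := by
  simp [treeDist, gromov_one_left hc hl1, hα]

end UniversalTree

theorem universal_tree_action_isometric_general {Λ : Type*} [AddCommGroup Λ] [LinearOrder Λ] [IsOrderedAddMonoid Λ]
    {G : Type*} [Group G] (l : G → Λ) (c : G → G → Λ)
    (hc : ∀ x y, 2 • c x y = l x + l y - l (x⁻¹ * y))
    (hL1' : l 1 = 0)
    (hL2 : ∀ x, l x⁻¹ = l x)
    (hL3 : ∀ x y z, c x z < c x y → c x z = c y z)
    (d : Λ × G → Λ × G → Λ)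
    (hd : ∀ p q : Λ × G, d p q = p.1 + q.1 - 2 • min p.1 (min q.1 (c p.2 q.2)))
    (act : G → Λ × G → Λ × G)
    (hact : ∀ (f : G) (p : Λ × G), act f p =
      if p.1 ≤ c f⁻¹ p.2 then (l f + p.1 - 2 • min p.1 (c f⁻¹ p.2), f)
      else (l f + p.1 - 2 • c f⁻¹ p.2, f * p.2)) :
    ∀ (f g h : G) (α β : Λ),
      0 ≤ α → α ≤ l g → 0 ≤ β → β ≤ l h →
      (d (act f (α, g)) (act f (β, h)) = d (α, g) (β, h)) ∧
      (d (act f ((0 : Λ), (1 : G))) (act f (α, g)) = d ((0 : Λ), (1 : G)) (α, g)) ∧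
      (d ((0 : Λ), (1 : G)) (α, g) = α) := by
  obtain rfl : d = treeDist c := funext₂ hd
  obtain rfl : act = treeSMul l c := funext₂ hact
  intro f g h α β hα _ hβ _
  exact ⟨treeDist_treeSMul hc hL1' hL2 hL3 f g h hβ,
    treeDist_treeSMul hc hL1' hL2 hL3 f 1 g hα, treeDist_one_left hc hL1' g hα⟩

/-- The action of `G` on `Γ_G` is isometric: for all `f, g, h ∈ G`,
`α ∈ [0,|g|]`, `β ∈ [0,|h|]`, `d(f·⟨α,g⟩, f·⟨β,h⟩) = d(⟨α,g⟩, ⟨β,h⟩)`.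
In particular `d(f·ε, f·⟨α,g⟩) = d(ε, ⟨α,g⟩) = α`, where `ε = ⟨0,1⟩`.

`G ≤ CDR(Λ,X)` is abstracted as a group with a free Lyndon length function
`l : G → Λ` (Λ discretely ordered), Gromov product `c`, universal-tree metric
`d(⟨α,f⟩,⟨β,g⟩) = α+β−2min{α,β,c(f,g)}`, and the action
`f·⟨α,g⟩ = ⟨|f|+α−2min{α,c(f⁻¹,g)}, f⟩` if `α ≤ c(f⁻¹,g)`, else
`⟨|f|+α−2c(f⁻¹,g), f*g⟩`. -/
theorem universal_tree_action_isometric {Λ : Type*} [AddCommGroup Λ] [LinearOrder Λ] [IsOrderedAddMonoid Λ]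
    [One Λ] (hone : (0 : Λ) < 1) (hdisc : ∀ e : Λ, 0 < e → (1 : Λ) ≤ e)
    {G : Type*} [Group G] (l : G → Λ) (c : G → G → Λ)
    (hc : ∀ x y, 2 • c x y = l x + l y - l (x⁻¹ * y))
    (hL1 : ∀ x, 0 ≤ l x) (hL1' : l 1 = 0)
    (hL2 : ∀ x, l x⁻¹ = l x)
    (hL3 : ∀ x y z, c x z < c x y → c x z = c y z)
    (hfree : ∀ g : G, g ≠ 1 → l g < l (g * g))
    (d : Λ × G → Λ × G → Λ)
    (hd : ∀ p q : Λ × G, d p q = p.1 + q.1 - 2 • min p.1 (min q.1 (c p.2 q.2)))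
    (act : G → Λ × G → Λ × G)
    (hact : ∀ (f : G) (p : Λ × G), act f p =
      if p.1 ≤ c f⁻¹ p.2 then (l f + p.1 - 2 • min p.1 (c f⁻¹ p.2), f)
      else (l f + p.1 - 2 • c f⁻¹ p.2, f * p.2)) :
    ∀ (f g h : G) (α β : Λ),
      0 ≤ α → α ≤ l g → 0 ≤ β → β ≤ l h →
      (d (act f (α, g)) (act f (β, h)) = d (α, g) (β, h)) ∧
      (d (act f ((0 : Λ), (1 : G))) (act f (α, g)) = d ((0 : Λ), (1 : G)) (α, g)) ∧
      (d ((0 : Λ), (1 : G)) (α, g) = α) :=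
  universal_tree_action_isometric_general l c hc hL1' hL2 hL3 d hd act hact
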